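/- arXiv:2107.02587 — 2 statements merged into one kernel-verified Lean document; each statement's English description precedes it below -/
import Mathlib

section
/- Every κ-Lindelöf regular Hausdorff space of weight at most κ is an fSC_κ-space. -/
/-!
Player II answers I's move `(U_α, x_α)`, where `U_α = W ∩ ⋂_{β<α} V_β` with `W` open, by an
open `O_α ∋ x_α` whose closure lies in `W` and, at a successor round `α = β + 1`, in `O_β`
(regularity); she plays `V_α = ⋂_{β≤α} O_β`. In a complete run `x_γ ∈ ⋂_{β<γ} cl O_β` for every
`γ < κ`, so, since a subcover of size `< κ` is bounded in the regular cardinal `κ`,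
`κ`-Lindelöfness makes `⋂_α cl O_α` nonempty; and `⋂_α cl O_α = ⋂_α O_α = ⋂_α V_α` because
`cl O_{β+1} ⊆ O_β`.
-/

universe u v

open Cardinal Set

namespace GDST

/-- A *limit element* of an order: an element with some predecessor but
no immediate predecessor (i.e. it sits at a limit position). -/
def IsLimitElt {α : Type v} [LT α] (a : α) : Prop :=
  (∃ b, b < a) ∧ ∀ b, b < a → ∃ c, b < c ∧ c < a

/-- The space `X` has weight at most `κ`: it admits a topological basis of cardinality ≤ κ. -/
def HasWeightLE (κ : Cardinal.{u}) (X : Type u) [TopologicalSpace X] : Prop :=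
  ∃ B : Set (Set X), TopologicalSpace.IsTopologicalBasis B ∧ #B ≤ κ

/-- `X` is `κ`-additive: intersections of fewer than `κ` open sets are open. -/
def KAdditive (κ : Cardinal.{u}) (X : Type u) [TopologicalSpace X] : Prop :=
  ∀ S : Set (Set X), #S < κ → (∀ U ∈ S, IsOpen U) → IsOpen (⋂₀ S)

/-- `X` is `κ`-Lindelöf: every open cover has a subcover of size `< κ`. -/
def KLindelof (κ : Cardinal.{u}) (X : Type u) [TopologicalSpace X] : Prop :=
  ∀ 𝒰 : Set (Set X), (∀ U ∈ 𝒰, IsOpen U) → ⋃₀ 𝒰 = Set.univ →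
    ∃ 𝒱 ⊆ 𝒰, #𝒱 < κ ∧ ⋃₀ 𝒱 = Set.univ

/-- `X` is `κ`-perfect: no point `x` is `κ`-isolated, i.e. no `{x}` is an intersection
of fewer than `κ` open sets. -/
def KPerfect (κ : Cardinal.{u}) (X : Type u) [TopologicalSpace X] : Prop :=
  ∀ x : X, ¬ ∃ S : Set (Set X), #S < κ ∧ (∀ U ∈ S, IsOpen U) ∧ ⋂₀ S = {x}

/-- `A` is `G_δ^κ` in `X`: an intersection of `κ`-many open sets. -/
def IsGDeltaKappa (κ : Cardinal.{u}) {X : Type u} [TopologicalSpace X] (A : Set X) : Prop :=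
  ∃ U : κ.ord.ToType → Set X, (∀ i, IsOpen (U i)) ∧ A = ⋂ i, U i

/-! ### Generalized Baire and Cantor spaces -/

/-- The bounded topology on `ι → A`: generated by the sets of functions with a
prescribed restriction to a proper initial segment `{b | b < a}` of `ι`. -/
def BoundedTopology (ι : Type u) [LinearOrder ι] (A : Type v) : TopologicalSpace (ι → A) :=
  TopologicalSpace.generateFrom
    {U | ∃ (a : ι) (y : ι → A), U = {x : ι → A | ∀ b, b < a → x b = y b}}

/-- The generalized Baire space `κ^κ`. -/
def GenBaire (κ : Cardinal.{u}) : Type u := κ.ord.ToType → κ.ord.ToType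

noncomputable instance (κ : Cardinal.{u}) : TopologicalSpace (GenBaire κ) :=
  BoundedTopology κ.ord.ToType κ.ord.ToType

/-- The generalized Cantor space `2^κ`. -/
def GenCantor (κ : Cardinal.{u}) : Type u := κ.ord.ToType → Bool

noncomputable instance (κ : Cardinal.{u}) : TopologicalSpace (GenCantor κ) :=
  BoundedTopology κ.ord.ToType Bool

/-! ### The strong and fair (strong) κ-Choquet games -/

/-- A transfinite sequence of moves of player I: at each round a pair `(U, x)`. -/
abbrev IMoves (κ : Cardinal.{u}) (X : Type u) : Type u := κ.ord.ToType → Set X × X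

/-- A strategy for player II: given the moves of I (only the moves up to the current
round may be used, see `IsIIStrategy`) and the current round, produce II's move. -/
abbrev Strategy (κ : Cardinal.{u}) (X : Type u) : Type u := IMoves κ X → κ.ord.ToType → Set X

/-- The intersection of the sets played before round `a`. -/
def InterBelow {ι : Type u} {X : Type u} [LT ι] (V : ι → Set X) (a : ι) : Set X :=
  ⋂ b, ⋂ (_ : b < a), V b

/-- `U` is relatively open in `T`. -/
def RelOpenIn {X : Type u} [TopologicalSpace X] (T U : Set X) : Prop :=
  ∃ W : Set X, IsOpen W ∧ U = W ∩ T

/-- Player I's move at round `a` is legal: `(f a).1` is a nonempty relatively open subset of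
the intersection of all previously played sets, and the point `(f a).2` belongs to it. -/
def LegalI {κ : Cardinal.{u}} {X : Type u} [TopologicalSpace X]
    (σ : Strategy κ X) (f : IMoves κ X) (a : κ.ord.ToType) : Prop :=
  RelOpenIn (InterBelow (σ f) a) (f a).1 ∧ (f a).2 ∈ (f a).1

/-- Player II's answer (by `σ`) at round `a` is legal: it is relatively open in the
intersection of all previously played sets, contains I's point, and is contained in I's set. -/
def LegalII {κ : Cardinal.{u}} {X : Type u} [TopologicalSpace X]
    (σ : Strategy κ X) (f : IMoves κ X) (a : κ.ord.ToType) : Prop :=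
  RelOpenIn (InterBelow (σ f) a) (σ f a) ∧ (f a).2 ∈ σ f a ∧ σ f a ⊆ (f a).1

/-- All moves before round `a` were legal. -/
def LegalBelow {κ : Cardinal.{u}} {X : Type u} [TopologicalSpace X]
    (σ : Strategy κ X) (f : IMoves κ X) (a : κ.ord.ToType) : Prop :=
  ∀ b, b < a → LegalI σ f b ∧ LegalII σ f b

/-- `σ` only depends on the moves of I played so far. -/
def IsIIStrategy {κ : Cardinal.{u}} {X : Type u} (σ : Strategy κ X) : Prop :=
  ∀ f g : IMoves κ X, ∀ a, (∀ b, b ≤ a → f b = g b) → σ f a = σ g a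

/-- `σ` is a winning strategy for player II in the strong κ-Choquet game `G^s_κ(X)`:
it answers legally to legal positions, and in any (possibly partial) legal run the
intersection of the played sets at every limit round—including the final one—is nonempty. -/
def WinningStrong {κ : Cardinal.{u}} {X : Type u} [TopologicalSpace X]
    (σ : Strategy κ X) : Prop :=
  IsIIStrategy σ ∧
  (∀ f a, LegalBelow σ f a → LegalI σ f a → LegalII σ f a) ∧
  (∀ f a, IsLimitElt a → LegalBelow σ f a → (InterBelow (σ f) a).Nonempty) ∧
  (∀ f, (∀ a, LegalI σ f a ∧ LegalII σ f a) → (⋂ a, σ f a).Nonempty)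

/-- `σ` is a winning strategy for player II in the fair strong κ-Choquet game `fG^s_κ(X)`:
it answers legally to legal positions, and for every legal run either the intersection of
the played sets is empty at some limit round `< κ`, or the final intersection is nonempty. -/
def WinningFair {κ : Cardinal.{u}} {X : Type u} [TopologicalSpace X]
    (σ : Strategy κ X) : Prop :=
  IsIIStrategy σ ∧
  (∀ f a, LegalBelow σ f a → LegalI σ f a → LegalII σ f a) ∧
  (∀ f, (∀ a, LegalI σ f a ∧ LegalII σ f a) →
    (∃ a, IsLimitElt a ∧ InterBelow (σ f) a = ∅) ∨ (⋂ a, σ f a).Nonempty)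

/-- `X` is a strong κ-Choquet space. -/
def SCSpace (κ : Cardinal.{u}) (X : Type u) [TopologicalSpace X] : Prop :=
  HasWeightLE κ X ∧ ∃ σ : Strategy κ X, WinningStrong σ

/-- `X` is a strongly fair κ-Choquet space. -/
def fSCSpace (κ : Cardinal.{u}) (X : Type u) [TopologicalSpace X] : Prop :=
  HasWeightLE κ X ∧ ∃ σ : Strategy κ X, WinningFair σ

/-! ### Trees on κ -/

/-- Sequences of length `< κ` with values in `κ`, encoded as pairs `(a, x)` representing
the restriction of `x : κ → κ` to the initial segment `{b | b < a}`. -/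
abbrev TreeSeq (κ : Cardinal.{u}) : Type u := κ.ord.ToType × (κ.ord.ToType → κ.ord.ToType)

/-- `T` is a tree on `κ`: membership of `(a, x)` only depends on the restriction of `x`
below `a` (so that `T` really is a set of `<κ`-sequences), and `T` is closed under
initial segments. -/
def IsTreeOn (κ : Cardinal.{u}) (T : Set (TreeSeq κ)) : Prop :=
  (∀ a, ∀ x y : κ.ord.ToType → κ.ord.ToType,
      (∀ b, b < a → x b = y b) → ((a, x) ∈ T ↔ (a, y) ∈ T)) ∧
  (∀ a x, (a, x) ∈ T → ∀ b, b ≤ a → (b, x) ∈ T)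

/-- The body `[T]` of a tree `T` on `κ`. -/
def TreeBody (κ : Cardinal.{u}) (T : Set (TreeSeq κ)) : Set (GenBaire κ) :=
  {x | ∀ a, (a, x) ∈ T}

/-- `T` is pruned: every element has extensions in `T` of every length `< κ`. -/
def TreePruned (κ : Cardinal.{u}) (T : Set (TreeSeq κ)) : Prop :=
  ∀ a x, (a, x) ∈ T → ∀ c, a ≤ c → ∃ y, (∀ b, b < a → y b = x b) ∧ (c, y) ∈ T

/-- `T` is `<κ`-closed: a limit-length sequence all of whose proper initial segments
lie in `T` lies in `T`. -/
def TreeLtClosed (κ : Cardinal.{u}) (T : Set (TreeSeq κ)) : Prop :=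
  ∀ a, IsLimitElt a → ∀ x, (∀ b, b < a → (b, x) ∈ T) → (a, x) ∈ T

/-- `T` is superclosed: a pruned and `<κ`-closed tree. -/
def IsSuperclosedTree (κ : Cardinal.{u}) (T : Set (TreeSeq κ)) : Prop :=
  IsTreeOn κ T ∧ TreePruned κ T ∧ TreeLtClosed κ T

/-- A subset of the generalized Baire space is superclosed if it is the body of a
superclosed tree. -/
def IsSuperclosedSet (κ : Cardinal.{u}) (C : Set (GenBaire κ)) : Prop :=
  ∃ T : Set (TreeSeq κ), IsSuperclosedTree κ T ∧ C = TreeBody κ T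

/-- The `a`-th level of a tree `T` on `κ`. -/
def TreeLev (κ : Cardinal.{u}) (T : Set (TreeSeq κ)) (a : κ.ord.ToType) :
    Set ({b : κ.ord.ToType // b < a} → κ.ord.ToType) :=
  {s | ∃ x, (a, x) ∈ T ∧ ∀ b : {b : κ.ord.ToType // b < a}, x b.1 = s b}

/-- κ has the tree property: every tree on κ all of whose levels are nonempty of size `< κ`
has a (cofinal) branch. -/
def TreeProperty (κ : Cardinal.{u}) : Prop :=
  ∀ T : Set (TreeSeq κ), IsTreeOn κ T →
    (∀ a, (TreeLev κ T a).Nonempty ∧ #(TreeLev κ T a) < κ) →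
    ∃ x : κ.ord.ToType → κ.ord.ToType, ∀ a, (a, x) ∈ T

/-- κ is (strongly) inaccessible. -/
def Inaccessible (κ : Cardinal.{u}) : Prop :=
  ℵ₀ < κ ∧ κ.IsRegular ∧ ∀ μ : Cardinal.{u}, μ < κ → (2 : Cardinal.{u}) ^ μ < κ

/-- κ is weakly compact: inaccessible with the tree property. -/
def WeaklyCompact (κ : Cardinal.{u}) : Prop := Inaccessible κ ∧ TreeProperty κ

/-! ### κ-Borel sets -/

/-- The κ-Borel subsets of a topological space: the smallest family containing the open
sets and closed under complements and unions of at most κ-many sets. -/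
inductive KBorel (κ : Cardinal.{u}) {X : Type u} [TopologicalSpace X] : Set X → Prop
  | of_isOpen (U : Set X) : IsOpen U → KBorel κ U
  | compl (S : Set X) : KBorel κ S → KBorel κ Sᶜ
  | iUnion (ι : Type u) (f : ι → Set X) : #ι ≤ κ → (∀ i, KBorel κ (f i)) → KBorel κ (⋃ i, f i)

/-! ### 𝔾-metric spaces -/

section GMetric

variable (G : Type u) [AddCommGroup G] [LinearOrder G] [IsOrderedAddMonoid G]

/-- The positive cone of `G` has coinitiality `κ`: there is a coinitial set of positive
elements of size `≤ κ`, and no such set of size `< κ`. -/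
def HasDegree (κ : Cardinal.{u}) : Prop :=
  (∃ S : Set G, (∀ ε ∈ S, 0 < ε) ∧ (∀ δ : G, 0 < δ → ∃ ε ∈ S, ε ≤ δ) ∧ #S ≤ κ) ∧
  (∀ S : Set G, (∀ ε ∈ S, 0 < ε) → (∀ δ : G, 0 < δ → ∃ ε ∈ S, ε ≤ δ) → κ ≤ #S)

variable {G}

/-- `d` is a `𝔾`-metric on `X`. -/
structure IsGMetric {X : Type u} (d : X → X → G) : Prop where
  nonneg : ∀ x y, 0 ≤ d x y
  eq_zero_iff : ∀ x y, d x y = 0 ↔ x = y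
  symm : ∀ x y, d x y = d y x
  triangle : ∀ x y z, d x z ≤ d x y + d y z

/-- The open ball of center `x` and radius `ε`. -/
def GBall {X : Type u} (d : X → X → G) (x : X) (ε : G) : Set X := {y | d x y < ε}

/-- The topology induced by a `𝔾`-metric. -/
def GMetricTopology {X : Type u} (d : X → X → G) : TopologicalSpace X :=
  TopologicalSpace.generateFrom {U | ∃ x ε, 0 < ε ∧ U = GBall d x ε}

/-- The `𝔾`-metric `d` is compatible with the topology of `X`. -/
def GCompatible {X : Type u} [t : TopologicalSpace X] (d : X → X → G) : Prop :=
  GMetricTopology d = t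

/-- A `κ`-sequence is `d`-Cauchy. -/
def GCauchy (κ : Cardinal.{u}) {X : Type u} (d : X → X → G) (x : κ.ord.ToType → X) : Prop :=
  ∀ ε : G, 0 < ε → ∃ a, ∀ b, a ≤ b → ∀ c, a ≤ c → d (x b) (x c) < ε

/-- A `κ`-sequence `d`-converges to `y`. -/
def GConvergesTo (κ : Cardinal.{u}) {X : Type u} (d : X → X → G)
    (x : κ.ord.ToType → X) (y : X) : Prop :=
  ∀ ε : G, 0 < ε → ∃ a, ∀ b, a ≤ b → d (x b) y < ε

/-- `d` is Cauchy-complete: every `d`-Cauchy `κ`-sequence converges. -/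
def GCauchyComplete (κ : Cardinal.{u}) {X : Type u} (d : X → X → G) : Prop :=
  ∀ x : κ.ord.ToType → X, GCauchy κ d x → ∃ y, GConvergesTo κ d x y

/-- `X` is `𝔾`-metrizable: it admits a compatible `𝔾`-metric. -/
def GMetrizable (G : Type u) [AddCommGroup G] [LinearOrder G] [IsOrderedAddMonoid G]
    (X : Type u) [TopologicalSpace X] : Prop :=
  ∃ d : X → X → G, IsGMetric d ∧ GCompatible d

/-- `X` is `𝔾`-Polish: it has weight `≤ κ` and admits a compatible Cauchy-complete
`𝔾`-metric. -/
def GPolish (G : Type u) [AddCommGroup G] [LinearOrder G] [IsOrderedAddMonoid G] (κ : Cardinal.{u})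
    (X : Type u) [TopologicalSpace X] : Prop :=
  HasWeightLE κ X ∧ ∃ d : X → X → G, IsGMetric d ∧ GCompatible d ∧ GCauchyComplete κ d

/-- `d` is spherically complete: every (nonempty) ⊆-decreasing transfinite sequence of open
`d`-balls has nonempty intersection. -/
def SphericallyComplete {X : Type u} (d : X → X → G) : Prop :=
  ∀ o : Ordinal.{u}, o ≠ 0 → ∀ c : o.ToType → Set X,
    (∀ i, ∃ x ε, 0 < ε ∧ c i = GBall d x ε) →
    (∀ i j, i ≤ j → c j ⊆ c i) → (⋂ i, c i).Nonempty

/-- `d` is spherically `<κ`-complete: every (nonempty) ⊆-decreasing sequence of open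
`d`-balls of length `< κ` has nonempty intersection. -/
def SphericallyLtComplete (κ : Cardinal.{u}) {X : Type u} (d : X → X → G) : Prop :=
  ∀ o : Ordinal.{u}, o ≠ 0 → o < κ.ord → ∀ c : o.ToType → Set X,
    (∀ i, ∃ x ε, 0 < ε ∧ c i = GBall d x ε) →
    (∀ i j, i ≤ j → c j ⊆ c i) → (⋂ i, c i).Nonempty

/-- `X` is a spherically complete `𝔾`-Polish space. -/
def GPolishSphericallyComplete (G : Type u) [AddCommGroup G] [LinearOrder G] [IsOrderedAddMonoid G] (κ : Cardinal.{u})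
    (X : Type u) [TopologicalSpace X] : Prop :=
  HasWeightLE κ X ∧
    ∃ d : X → X → G, IsGMetric d ∧ GCompatible d ∧ GCauchyComplete κ d ∧ SphericallyComplete d

/-- `X` is a spherically `<κ`-complete `𝔾`-Polish space. -/
def GPolishSphericallyLtComplete (G : Type u) [AddCommGroup G] [LinearOrder G] [IsOrderedAddMonoid G] (κ : Cardinal.{u})
    (X : Type u) [TopologicalSpace X] : Prop :=
  HasWeightLE κ X ∧
    ∃ d : X → X → G, IsGMetric d ∧ GCompatible d ∧ GCauchyComplete κ d ∧
      SphericallyLtComplete κ d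

end GMetric

/-! ### κ-Borel spaces -/

/-- `ℬ` is a `κ⁺`-algebra on `X`: closed under complements and unions of at most
κ-many sets. -/
def IsKplusAlgebra (κ : Cardinal.{u}) {X : Type u} (ℬ : Set (Set X)) : Prop :=
  (∀ S ∈ ℬ, Sᶜ ∈ ℬ) ∧
  (∀ (ι : Type u) (f : ι → Set X), #ι ≤ κ → (∀ i, f i ∈ ℬ) → (⋃ i, f i) ∈ ℬ)

/-- `ℬ` separates the points of `X`. -/
def SepPoints {X : Type u} (ℬ : Set (Set X)) : Prop :=
  ∀ x y : X, x ≠ y → ∃ S ∈ ℬ, x ∈ S ∧ y ∉ S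

/-- `(X, ℬ)` is a κ-Borel space: a `κ⁺`-algebra that separates points and is generated
(as a `κ⁺`-algebra) by a subfamily of size `≤ κ`. -/
def IsKBorelSpace (κ : Cardinal.{u}) {X : Type u} (ℬ : Set (Set X)) : Prop :=
  IsKplusAlgebra κ ℬ ∧ SepPoints ℬ ∧
    ∃ 𝒢 ⊆ ℬ, #𝒢 ≤ κ ∧
      ∀ ℬ' : Set (Set X), IsKplusAlgebra κ ℬ' → 𝒢 ⊆ ℬ' → ℬ ⊆ ℬ'

/-- The restriction `ℬ↾A` of a family of subsets of `X` to `A ⊆ X`. -/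
def RestrictFam {X : Type u} (ℬ : Set (Set X)) (A : Set X) : Set (Set ↥A) :=
  {T | ∃ S ∈ ℬ, T = Subtype.val ⁻¹' S}

/-- The family of κ-Borel sets of a topological space. -/
def KBorelFam (κ : Cardinal.{u}) (X : Type u) [TopologicalSpace X] : Set (Set X) :=
  {S | KBorel κ S}

/-- `e` is a κ-Borel isomorphism between `(X, ℬ)` and `(Y, 𝒞)`: a bijection under which
images and preimages of distinguished sets are distinguished. -/
def IsKBorelSpaceIso {X Y : Type u} (ℬ : Set (Set X)) (𝒞 : Set (Set Y)) (e : X ≃ Y) : Prop :=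
  (∀ S ∈ ℬ, e '' S ∈ 𝒞) ∧ (∀ S ∈ 𝒞, e ⁻¹' S ∈ ℬ)

/-- `(X, ℬ)` is a standard κ-Borel space: it is a κ-Borel space which is κ-Borel isomorphic
to a κ-Borel subset of the generalized Baire space (with the restricted κ-Borel structure). -/
def IsStandardKBorel (κ : Cardinal.{u}) {X : Type u} (ℬ : Set (Set X)) : Prop :=
  IsKBorelSpace κ ℬ ∧
    ∃ B₀ : Set (GenBaire κ), KBorel κ B₀ ∧
      ∃ e : X ≃ ↥B₀, IsKBorelSpaceIso ℬ (RestrictFam (KBorelFam κ (GenBaire κ)) B₀) e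
theorem RelOpenIn.subset {X : Type u} [TopologicalSpace X] {T U : Set X} (h : RelOpenIn T U) :
    U ⊆ T := by
  obtain ⟨W, -, rfl⟩ := h
  exact inter_subset_right

section InitialSegmentInter

variable {ι : Type*} [LinearOrder ι] {α : Type*}

theorem biInter_le_eq_inter_biInter_lt (O : ι → Set α) (a : ι) :
    ⋂ b ≤ a, O b = O a ∩ ⋂ b < a, O b := by
  ext x
  simp only [mem_iInter, mem_inter_iff, le_iff_lt_or_eq]
  exact ⟨fun h => ⟨h a (Or.inr rfl), fun b hb => h b (Or.inl hb)⟩,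
    fun h b hb => hb.elim (h.2 b) fun hba => hba ▸ h.1⟩

theorem biInter_lt_biInter_le (O : ι → Set α) (a : ι) :
    ⋂ b < a, ⋂ c ≤ b, O c = ⋂ b < a, O b := by
  ext x
  simp only [mem_iInter]
  exact ⟨fun h b hb => h b hb b le_rfl, fun h b hb c hc => h c (hc.trans_lt hb)⟩

theorem iInter_biInter_le (O : ι → Set α) : ⋂ a, ⋂ b ≤ a, O b = ⋂ a, O a := by
  ext x
  simp only [mem_iInter]
  exact ⟨fun h a => h a a le_rfl, fun h _ b _ => h b⟩

end InitialSegmentInter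

section ShrinkingAnswer

variable {X : Type u} [TopologicalSpace X]

/-- An answer `O` to the move `m = (U, x)`, given the intersection `past` of the earlier
answers and the open set `pred` that `O` has to shrink into. -/
def IsShrinkingAnswer (m : Set X × X) (past pred O : Set X) : Prop :=
  IsOpen O ∧ m.2 ∈ O ∧ O ∩ past ⊆ m.1 ∧ closure O ⊆ pred

open Classical in
noncomputable def shrinkingAnswer (m : Set X × X) (past pred : Set X) : Set X :=
  if h : ∃ O, IsShrinkingAnswer m past pred O then h.choose else Set.univ

theorem isOpen_shrinkingAnswer (m : Set X × X) (past pred : Set X) :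
    IsOpen (shrinkingAnswer m past pred) := by
  unfold shrinkingAnswer
  split_ifs with h
  exacts [h.choose_spec.1, isOpen_univ]

theorem isShrinkingAnswer_shrinkingAnswer {m : Set X × X} {past pred : Set X}
    (h : ∃ O, IsShrinkingAnswer m past pred O) :
    IsShrinkingAnswer m past pred (shrinkingAnswer m past pred) := by
  rw [shrinkingAnswer, dif_pos h]
  exact h.choose_spec

theorem exists_isShrinkingAnswer [RegularSpace X] {m : Set X × X} {past pred : Set X}
    (hm : RelOpenIn past m.1) (hx : m.2 ∈ m.1) (hpred : IsOpen pred) (hxpred : m.2 ∈ pred) :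
    ∃ O, IsShrinkingAnswer m past pred O := by
  obtain ⟨W, hW, hmW⟩ := hm
  have hxW : m.2 ∈ W := (hmW ▸ hx).1
  obtain ⟨C, hC, hCclosed, hCsub⟩ :=
    exists_mem_nhds_isClosed_subset ((hW.inter hpred).mem_nhds ⟨hxW, hxpred⟩)
  have hclosure : closure (interior C) ⊆ W ∩ pred :=
    (closure_minimal interior_subset hCclosed).trans hCsub
  refine ⟨interior C, isOpen_interior, mem_interior_iff_mem_nhds.2 hC, ?_,
    hclosure.trans inter_subset_right⟩
  rw [hmW]
  exact inter_subset_inter_left _ (subset_closure.trans (hclosure.trans inter_subset_left))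

end ShrinkingAnswer

theorem isOpen_biInter_covBy {X : Type*} [TopologicalSpace X] {ι : Type*} [LinearOrder ι]
    {O : ι → Set X} (hO : ∀ b, IsOpen (O b)) (a : ι) : IsOpen (⋂ b, ⋂ _ : b ⋖ a, O b) :=
  Set.Finite.isOpen_biInter (s := {b | b ⋖ a})
    (Set.Subsingleton.finite fun _ hb _ hc => hb.unique_left hc) fun b _ => hO b

section AnswerSeq

variable {X : Type u} [TopologicalSpace X] {ι : Type*} [LinearOrder ι] [WellFoundedLT ι]

noncomputable def answerSeq (f : ι → Set X × X) : ι → Set X :=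
  WellFoundedLT.fix fun a O =>
    shrinkingAnswer (f a) (⋂ b, ⋂ h : b < a, O b h) (⋂ b, ⋂ h : b ⋖ a, O b h.lt)

theorem answerSeq_eq (f : ι → Set X × X) (a : ι) :
    answerSeq f a =
      shrinkingAnswer (f a) (⋂ b < a, answerSeq f b) (⋂ b, ⋂ _ : b ⋖ a, answerSeq f b) :=
  WellFoundedLT.fix_eq _ a

theorem isOpen_answerSeq (f : ι → Set X × X) (a : ι) : IsOpen (answerSeq f a) := by
  rw [answerSeq_eq]
  exact isOpen_shrinkingAnswer _ _ _

theorem answerSeq_congr {f g : ι → Set X × X} {a : ι} (h : ∀ b ≤ a, f b = g b) :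
    answerSeq f a = answerSeq g a := by
  induction a using WellFoundedLT.induction with
  | _ a ih =>
    have hprev : ∀ b < a, answerSeq f b = answerSeq g b := fun b hb =>
      ih b hb fun c hc => h c (hc.trans hb.le)
    rw [answerSeq_eq, answerSeq_eq, h a le_rfl]
    congr 1
    · exact iInter₂_congr hprev
    · exact iInter₂_congr fun b hb => hprev b hb.lt

theorem isShrinkingAnswer_answerSeq [RegularSpace X] {f : ι → Set X × X} {a : ι}
    (hI : RelOpenIn (⋂ b < a, answerSeq f b) (f a).1) (hx : (f a).2 ∈ (f a).1) :
    IsShrinkingAnswer (f a) (⋂ b < a, answerSeq f b) (⋂ b, ⋂ _ : b ⋖ a, answerSeq f b)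
      (answerSeq f a) := by
  have hxpred : (f a).2 ∈ ⋂ b, ⋂ _ : b ⋖ a, answerSeq f b :=
    biInter_mono (fun _ hb => CovBy.lt hb) (fun _ _ => subset_rfl) (hI.subset hx)
  rw [answerSeq_eq]
  exact isShrinkingAnswer_shrinkingAnswer
    (exists_isShrinkingAnswer hI hx (isOpen_biInter_covBy (isOpen_answerSeq f) a) hxpred)

end AnswerSeq

theorem iInter_closure_eq_of_covBy {X : Type*} [TopologicalSpace X] {ι : Type*}
    [LinearOrder ι] [WellFoundedLT ι] [NoMaxOrder ι] {O : ι → Set X}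
    (hO : ∀ b c, b ⋖ c → closure (O c) ⊆ O b) :
    ⋂ a, closure (O a) = ⋂ a, O a := by
  refine Subset.antisymm (fun y hy => mem_iInter.2 fun a => ?_)
    (iInter_mono fun _ => subset_closure)
  obtain ⟨c, hac⟩ := exists_covBy_of_wellFoundedLT (not_isMax a)
  exact hO a c hac (mem_iInter.1 hy c)

theorem exists_gt_of_mk_lt {κ : Cardinal.{u}} (hκ : κ.IsRegular) {s : Set κ.ord.ToType}
    (hs : #s < κ) : ∃ γ, ∀ b ∈ s, b < γ :=
  not_isCofinal_iff.1 fun hcof =>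
    (Order.cof_le hcof).not_gt (by rwa [Ordinal.cof_toType, hκ.cof_ord])

section KLindelof

variable {κ : Cardinal.{u}} {X : Type u} [TopologicalSpace X]

theorem KLindelof.exists_subcover (hlin : KLindelof κ X) {ι : Type u} {U : ι → Set X}
    (hU : ∀ i, IsOpen (U i)) (hcover : ⋃ i, U i = Set.univ) :
    ∃ s : Set ι, #s < κ ∧ ⋃ i ∈ s, U i = Set.univ := by
  obtain ⟨𝒱, h𝒱U, h𝒱, h𝒱cover⟩ :=
    hlin (range U) (forall_mem_range.2 hU) (by rwa [sUnion_range])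
  choose idx hidx using fun V : 𝒱 => h𝒱U V.2
  refine ⟨range idx, mk_range_le.trans_lt h𝒱, eq_univ_of_forall fun x => ?_⟩
  obtain ⟨V, hV, hxV⟩ := h𝒱cover.symm ▸ mem_univ x
  exact mem_biUnion (mem_range_self ⟨V, hV⟩) (hidx ⟨V, hV⟩ ▸ hxV)

theorem KLindelof.iInter_nonempty (hκ : κ.IsRegular) (hlin : KLindelof κ X)
    {F : κ.ord.ToType → Set X} (hF : ∀ a, IsClosed (F a))
    (hne : ∀ γ, (⋂ b < γ, F b).Nonempty) : (⋂ a, F a).Nonempty := by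
  by_contra hempty
  obtain ⟨s, hs, hcover⟩ := hlin.exists_subcover (fun a => (hF a).isOpen_compl)
    (by rw [← compl_iInter, not_nonempty_iff_eq_empty.1 hempty, compl_empty])
  obtain ⟨γ, hγ⟩ := exists_gt_of_mk_lt hκ hs
  obtain ⟨x, hx⟩ := hne γ
  obtain ⟨a, ha, hxa⟩ := mem_iUnion₂.1 (hcover.symm ▸ mem_univ x)
  exact hxa (mem_iInter₂.1 hx a (hγ a ha))

end KLindelof

section ShrinkingStrategy

variable {κ : Cardinal.{u}} {X : Type u} [TopologicalSpace X]

noncomputable def shrinkingStrategy : Strategy κ X := fun f a => ⋂ b ≤ a, answerSeq f b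

theorem interBelow_shrinkingStrategy (f : IMoves κ X) (a : κ.ord.ToType) :
    InterBelow (shrinkingStrategy f) a = ⋂ b < a, answerSeq f b :=
  biInter_lt_biInter_le _ a

theorem isIIStrategy_shrinkingStrategy : IsIIStrategy (shrinkingStrategy (κ := κ) (X := X)) :=
  fun _ _ _ h => iInter₂_congr fun _ hb => answerSeq_congr fun c hc => h c (hc.trans hb)

theorem isShrinkingAnswer_of_legalI [RegularSpace X] {f : IMoves κ X} {a : κ.ord.ToType}
    (hI : LegalI shrinkingStrategy f a) :
    IsShrinkingAnswer (f a) (⋂ b < a, answerSeq f b) (⋂ b, ⋂ _ : b ⋖ a, answerSeq f b)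
      (answerSeq f a) :=
  isShrinkingAnswer_answerSeq (interBelow_shrinkingStrategy f a ▸ hI.1) hI.2

theorem legalII_shrinkingStrategy [RegularSpace X] {f : IMoves κ X} {a : κ.ord.ToType}
    (hI : LegalI shrinkingStrategy f a) : LegalII shrinkingStrategy f a := by
  obtain ⟨hopen, hxO, hsub, -⟩ := isShrinkingAnswer_of_legalI hI
  have hσ : shrinkingStrategy f a = answerSeq f a ∩ InterBelow (shrinkingStrategy f) a := by
    rw [interBelow_shrinkingStrategy]
    exact biInter_le_eq_inter_biInter_lt _ a
  refine ⟨⟨_, hopen, hσ⟩, hσ ▸ ⟨hxO, hI.1.subset hI.2⟩, hσ ▸ ?_⟩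
  rwa [interBelow_shrinkingStrategy]

theorem iInter_shrinkingStrategy_nonempty [RegularSpace X] (hκ : κ.IsRegular)
    (hlin : KLindelof κ X) {f : IMoves κ X} (hrun : ∀ a, LegalI shrinkingStrategy f a) :
    (⋂ a, shrinkingStrategy f a).Nonempty := by
  have : NoMaxOrder κ.ord.ToType := Cardinal.noMaxOrder hκ.aleph0_le
  have hpast (γ) : (f γ).2 ∈ ⋂ b < γ, answerSeq f b :=
    interBelow_shrinkingStrategy f γ ▸ (hrun γ).1.subset (hrun γ).2
  have hclosure : ⋂ a, closure (answerSeq f a) = ⋂ a, answerSeq f a :=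
    iInter_closure_eq_of_covBy fun b c hbc =>
      (isShrinkingAnswer_of_legalI (hrun c)).2.2.2.trans (biInter_subset_of_mem hbc)
  simp only [shrinkingStrategy, iInter_biInter_le, ← hclosure]
  exact hlin.iInter_nonempty hκ (fun _ => isClosed_closure) fun γ =>
    ⟨_, biInter_mono subset_rfl (fun _ _ => subset_closure) (hpast γ)⟩

end ShrinkingStrategy

theorem stmt_17_general (κ : Cardinal.{u}) (hreg : κ.IsRegular)
    (X : Type u) [TopologicalSpace X] [RegularSpace X]
    (hw : HasWeightLE κ X) (hlin : KLindelof κ X) : fSCSpace κ X :=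
  ⟨hw, shrinkingStrategy, isIIStrategy_shrinkingStrategy,
    fun _ _ _ hI => legalII_shrinkingStrategy hI,
    fun _ hrun => Or.inr (iInter_shrinkingStrategy_nonempty hreg hlin fun a => (hrun a).1)⟩

/-- every κ-Lindelöf regular Hausdorff space of weight at most κ is an
fSC_κ-space. -/
theorem stmt_17 (κ : Cardinal.{u}) (hreg : κ.IsRegular) (hunc : ℵ₀ < κ)
    (hpow : (2 : Cardinal.{u}) ^< κ = κ)
    (X : Type u) [TopologicalSpace X] [T2Space X] [RegularSpace X]
    (hw : HasWeightLE κ X) (hlin : KLindelof κ X) : fSCSpace κ X :=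
  stmt_17_general κ hreg X hw hlin

end GDST
end

section
/- Let (X, B) be a standard κ-Borel space and let A ⊆ X. Then (A, B↾A) is a standard κ-Borel space if and only if A ∈ B. -/
universe u v

open Cardinal Set

namespace GDST

/-! The copy `R` of `A` in `κ^κ` is, by standardness of `A`, in bijection with a κ-Borel set
`B ⊆ κ^κ` via a map `φ : B ≃ R` that is κ-Borel in both directions. Measurability of `φ⁻¹`
yields κ-Borel sets `W b v` with `φ x ∈ W b v ↔ x b = v`; on the κ-Borel set of points lying in
exactly one `W b v` for every `b`, they define a κ-Borel left inverse `decode` of `φ`. Hence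
`R = {y | decode y ∈ B ∧ φ (decode y) = y}`, and the last condition is κ-Borel since `φ` is.
The hypothesis `2^{<κ} = κ` enters through the `κ`-sized basis of `κ^κ`, which makes preimages
of κ-Borel sets under `decode` κ-Borel. -/

open TopologicalSpace Filter Topology

section Cardinality

variable {κ : Cardinal.{u}}

theorem mk_Iio_ord_toType_lt (a : κ.ord.ToType) : #(Iio a) < κ := by
  simpa using mk_Iio_lt a (by simp)

theorem two_le_of_isRegular (hreg : κ.IsRegular) : 2 ≤ κ :=
  natCast_lt_aleph0.le.trans hreg.aleph0_le

theorem mk_sigma_le_of_forall_le {ι : Type u} {f : ι → Type u} (hκ : ℵ₀ ≤ κ) (hι : #ι ≤ κ)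
    (hf : ∀ i, #(f i) ≤ κ) : #(Σ i, f i) ≤ κ := by
  rw [mk_sigma]
  calc sum (fun i => #(f i)) ≤ sum (fun _ : ι => κ) := sum_le_sum _ _ hf
    _ = #ι * κ := by simp
    _ ≤ κ := mul_le_of_le hκ hι le_rfl

theorem exists_forall_lt_of_mk_lt (hreg : κ.IsRegular) {M : Type u} (hM : #M < κ)
    (f : M → κ.ord.ToType) : ∃ a, ∀ i, f i < a := by
  have := Cardinal.noMaxOrder hreg.aleph0_le
  have hcof : Order.cof κ.ord.ToType = κ := by rw [Ordinal.cof_toType, hreg.cof_ord]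
  have hbdd : BddAbove (range f) := BddAbove.of_not_isCofinal fun h =>
    ((hcof ▸ Order.cof_le h).trans mk_range_le).not_gt hM
  obtain ⟨a, ha⟩ := hbdd
  obtain ⟨b, hab⟩ := exists_gt a
  exact ⟨b, fun i => (ha ⟨i, rfl⟩).trans_lt hab⟩

theorem mk_fun_toType_ord_le (hreg : κ.IsRegular) (hpow : (2 : Cardinal.{u}) ^< κ = κ)
    {M : Type u} (hM : #M < κ) : #(M → κ.ord.ToType) ≤ κ := by
  have hsurj : Function.Surjective
      fun p : Σ a : κ.ord.ToType, M → Iio a => fun i => (p.2 i : κ.ord.ToType) := by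
    intro f
    obtain ⟨a, ha⟩ := exists_forall_lt_of_mk_lt hreg hM f
    exact ⟨⟨a, fun i => ⟨f i, ha i⟩⟩, rfl⟩
  refine (mk_le_of_surjective hsurj).trans
    (mk_sigma_le_of_forall_le hreg.aleph0_le (mk_ord_toType κ).le fun a => ?_)
  calc #(M → Iio a) = #(Iio a) ^ #M := (power_def _ _).symm
    _ ≤ (2 ^ #(Iio a)) ^ #M := power_le_power_right (cantor _).le
    _ = 2 ^ (#(Iio a) * #M) := power_mul.symm
    _ ≤ 2 ^< κ := le_powerlt 2 (mul_lt_of_lt hreg.aleph0_le (mk_Iio_ord_toType_lt a) hM)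
    _ = κ := hpow

theorem mk_segments_le (hreg : κ.IsRegular) (hpow : (2 : Cardinal.{u}) ^< κ = κ) :
    #(Σ a : κ.ord.ToType, Iio a → κ.ord.ToType) ≤ κ :=
  mk_sigma_le_of_forall_le hreg.aleph0_le (mk_ord_toType κ).le
    fun a => mk_fun_toType_ord_le hreg hpow (mk_Iio_ord_toType_lt a)

end Cardinality

section BaireSpace

variable {κ : Cardinal.{u}}

def basicNbhd (a : κ.ord.ToType) (t : Iio a → κ.ord.ToType) : Set (GenBaire κ) :=
  {x | ∀ b (h : b < a), x b = t ⟨b, h⟩}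

theorem mem_basicNbhd_domRestrict (a : κ.ord.ToType) (x : GenBaire κ) :
    x ∈ basicNbhd a ((Iio a).domRestrict x) :=
  fun _ _ => rfl

theorem isOpen_basicNbhd_domRestrict (a : κ.ord.ToType) (x : GenBaire κ) :
    IsOpen (basicNbhd a ((Iio a).domRestrict x)) :=
  GenerateOpen.basic _ ⟨a, x, rfl⟩

theorem nhds_basis_basicNbhd [Nonempty κ.ord.ToType] (x : GenBaire κ) :
    (𝓝 x).HasBasis (fun _ => True) fun a => basicNbhd a ((Iio a).domRestrict x) := by
  have hnhds : 𝓝 x = ⨅ a, 𝓟 (basicNbhd a ((Iio a).domRestrict x)) := by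
    refine (nhds_generateFrom (a := x)).trans (le_antisymm ?_ ?_)
    · exact le_iInf fun a => iInf₂_le _ ⟨mem_basicNbhd_domRestrict a x, a, x, rfl⟩
    · refine le_iInf₂ fun s ⟨hxs, a, y, hs⟩ => iInf_le_of_le a (principal_mono.2 ?_)
      subst hs
      exact fun z hz b hb => (hz b hb).trans (hxs b hb)
  rw [hnhds]
  refine hasBasis_iInf_principal (directed_of_isDirected_le fun a c hac => ?_)
  exact fun z hz b hb => hz b (hb.trans_le hac)

theorem iUnion_basicNbhd_of_isOpen [Nonempty κ.ord.ToType] {S : Set (GenBaire κ)}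
    (hS : IsOpen S) :
    ⋃ p : {p : Σ a : κ.ord.ToType, Iio a → κ.ord.ToType // basicNbhd p.1 p.2 ⊆ S},
      basicNbhd p.1.1 p.1.2 = S := by
  refine Subset.antisymm (iUnion_subset fun p => p.2) fun x hx => ?_
  obtain ⟨a, -, ha⟩ := (nhds_basis_basicNbhd x).mem_iff.1 (hS.mem_nhds hx)
  exact mem_iUnion.2 ⟨⟨⟨a, (Iio a).domRestrict x⟩, ha⟩, mem_basicNbhd_domRestrict a x⟩

theorem isOpen_setOf_apply_eq (hκ : ℵ₀ ≤ κ) (b v : κ.ord.ToType) :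
    IsOpen {x : GenBaire κ | x b = v} := by
  have := Cardinal.noMaxOrder hκ
  refine isOpen_iff_forall_mem_open.2 fun x hx => ?_
  obtain ⟨a, hba⟩ := exists_gt b
  exact ⟨_, fun y hy => (hy b hba).trans hx, isOpen_basicNbhd_domRestrict a x,
    mem_basicNbhd_domRestrict a x⟩

end BaireSpace

namespace KBorel

variable {κ : Cardinal.{u}} {X : Type u} [TopologicalSpace X]

theorem iInter {ι : Type u} (hι : #ι ≤ κ) {f : ι → Set X} (hf : ∀ i, KBorel κ (f i)) :
    KBorel κ (⋂ i, f i) := by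
  rw [← compl_compl (⋂ i, f i), compl_iInter]
  exact compl _ (iUnion ι _ hι fun i => compl _ (hf i))

theorem union (hκ : 2 ≤ κ) {S T : Set X} (hS : KBorel κ S) (hT : KBorel κ T) :
    KBorel κ (S ∪ T) := by
  rw [union_eq_iUnion, ← (Equiv.ulift (α := Bool)).surjective.iUnion_comp]
  exact iUnion _ _ (by simpa using hκ) fun ⟨b⟩ => by cases b <;> assumption

theorem inter (hκ : 2 ≤ κ) {S T : Set X} (hS : KBorel κ S) (hT : KBorel κ T) :
    KBorel κ (S ∩ T) := by
  rw [← compl_compl (S ∩ T), compl_inter]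
  exact compl _ (union hκ (compl _ hS) (compl _ hT))

end KBorel

section BorelMaps

variable {κ : Cardinal.{u}}

theorem KBorel.inter_preimage (hreg : κ.IsRegular) (hpow : (2 : Cardinal.{u}) ^< κ = κ)
    {G : Set (GenBaire κ)} (hG : KBorel κ G) {g : GenBaire κ → GenBaire κ}
    (hg : ∀ b v, KBorel κ (G ∩ g ⁻¹' {x | x b = v})) {S : Set (GenBaire κ)}
    (hS : KBorel κ S) : KBorel κ (G ∩ g ⁻¹' S) := by
  have h2 : (2 : Cardinal) ≤ κ := two_le_of_isRegular hreg
  have : Nonempty κ.ord.ToType := mk_ne_zero_iff.1 (by simpa using hreg.pos.ne')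
  have hbasic : ∀ a t, KBorel κ (G ∩ g ⁻¹' basicNbhd a t) := fun a t => by
    have hEq : G ∩ g ⁻¹' basicNbhd a t = G ∩ ⋂ b : Iio a, G ∩ g ⁻¹' {x | x b = t b} := by
      ext y
      simp only [basicNbhd, mem_inter_iff, mem_preimage, mem_iInter, mem_ofPred_eq, Subtype.forall]
      exact ⟨fun h => ⟨h.1, fun b hb => ⟨h.1, h.2 b hb⟩⟩, fun h => ⟨h.1, fun b hb => (h.2 b hb).2⟩⟩
    rw [hEq]
    exact hG.inter h2 (.iInter (mk_Iio_ord_toType_lt a).le fun b => hg b (t b))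
  induction hS with
  | of_isOpen U hU =>
    rw [← iUnion_basicNbhd_of_isOpen hU, preimage_iUnion, inter_iUnion]
    exact .iUnion _ _ (mk_subtype_le _ |>.trans (mk_segments_le hreg hpow)) fun p => hbasic _ _
  | compl S _ ih =>
    rw [preimage_compl, ← sdiff_eq, ← sdiff_self_inter, sdiff_eq]
    exact hG.inter h2 ih.compl
  | iUnion ι f hι _ ih =>
    rw [preimage_iUnion, inter_iUnion]
    exact .iUnion ι _ hι ih

end BorelMaps

section Decoding

variable {κ : Cardinal.{u}} (W : κ.ord.ToType → κ.ord.ToType → Set (GenBaire κ))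

def decodable : Set (GenBaire κ) :=
  {y | ∀ b, ∃! v, y ∈ W b v}

open Classical in
noncomputable def decode (y : GenBaire κ) : GenBaire κ :=
  fun b => if h : ∃ v, y ∈ W b v then h.choose else y b

variable {W}

theorem decode_apply_eq_iff {y : GenBaire κ} (hy : y ∈ decodable W) (b v : κ.ord.ToType) :
    decode W y b = v ↔ y ∈ W b v := by
  have hex : ∃ v, y ∈ W b v := (hy b).exists
  rw [decode, dif_pos hex]
  exact ⟨fun h => h ▸ hex.choose_spec, (hy b).unique hex.choose_spec⟩

theorem mem_decodable_and_decode_eq {x y : GenBaire κ} (h : ∀ b v, y ∈ W b v ↔ x b = v) :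
    y ∈ decodable W ∧ decode W y = x := by
  have hy : y ∈ decodable W := fun b => ⟨_, (h b _).2 rfl, fun v hv => ((h b v).1 hv).symm⟩
  exact ⟨hy, funext fun b => (decode_apply_eq_iff hy b _).2 ((h b _).2 rfl)⟩

theorem inter_decode_preimage (b v : κ.ord.ToType) :
    decodable W ∩ decode W ⁻¹' {x | x b = v} = decodable W ∩ W b v := by
  ext y
  exact and_congr_right fun hy => decode_apply_eq_iff hy b v

theorem kBorel_decodable (hκ : 2 ≤ κ) (hW : ∀ b v, KBorel κ (W b v)) :
    KBorel κ (decodable W) := by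
  have hEq : decodable W = ⋂ b, ⋃ v, W b v ∩ ⋂ v' : {v' // v' ≠ v}, (W b v')ᶜ := by
    ext y
    simp only [decodable, ExistsUnique, mem_ofPred_eq, mem_iInter, mem_iUnion, mem_inter_iff,
      mem_compl_iff, Subtype.forall, ne_eq, not_imp_not]
  rw [hEq]
  exact .iInter (mk_ord_toType κ).le fun b => .iUnion _ _ (mk_ord_toType κ).le fun v =>
    (hW b v).inter hκ <|
      .iInter ((mk_subtype_le _).trans (mk_ord_toType κ).le) fun v' => (hW b v').compl

end Decoding

section Isomorphisms

variable {X Y Z : Type u}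

theorem IsKBorelSpaceIso.symm {ℬ : Set (Set X)} {𝒞 : Set (Set Y)} {e : X ≃ Y}
    (he : IsKBorelSpaceIso ℬ 𝒞 e) : IsKBorelSpaceIso 𝒞 ℬ e.symm :=
  ⟨fun S hS => by rw [e.image_symm_eq_preimage]; exact he.2 S hS,
    fun S hS => by rw [← e.image_eq_preimage_symm]; exact he.1 S hS⟩

theorem IsKBorelSpaceIso.trans {ℬ : Set (Set X)} {𝒞 : Set (Set Y)} {𝒟 : Set (Set Z)}
    {e : X ≃ Y} {f : Y ≃ Z} (he : IsKBorelSpaceIso ℬ 𝒞 e) (hf : IsKBorelSpaceIso 𝒞 𝒟 f) :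
    IsKBorelSpaceIso ℬ 𝒟 (e.trans f) :=
  ⟨fun S hS => by rw [Equiv.coe_trans, image_comp]; exact hf.1 _ (he.1 S hS),
    fun S hS => by rw [Equiv.coe_trans, preimage_comp]; exact he.2 _ (hf.2 S hS)⟩

theorem IsKBorelSpaceIso.restrictFam {ℬ : Set (Set X)} {𝒞 : Set (Set Y)} {e : X ≃ Y}
    (he : IsKBorelSpaceIso ℬ 𝒞 e) (A : Set X) :
    IsKBorelSpaceIso (RestrictFam ℬ A) (RestrictFam 𝒞 (e '' A)) (e.image A) := by
  refine ⟨?_, ?_⟩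
  · rintro _ ⟨S, hS, rfl⟩
    refine ⟨e '' S, he.1 S hS, ?_⟩
    ext ⟨y, x, hx, rfl⟩
    exact ((e.image A).injective.mem_set_image (a := ⟨x, hx⟩)).trans
      e.injective.mem_set_image.symm
  · rintro _ ⟨S, hS, rfl⟩
    exact ⟨e ⁻¹' S, he.2 S hS, rfl⟩

theorem isKBorelSpaceIso_image_val (𝒟 : Set (Set Y)) (B : Set Y) (T : Set B) :
    IsKBorelSpaceIso (RestrictFam (RestrictFam 𝒟 B) T) (RestrictFam 𝒟 (Subtype.val '' T))
      (Equiv.Set.image _ T Subtype.val_injective) := by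
  refine ⟨?_, ?_⟩
  · rintro _ ⟨_, ⟨D, hD, rfl⟩, rfl⟩
    refine ⟨D, hD, ?_⟩
    ext ⟨y, x, hx, rfl⟩
    exact (Equiv.injective _).mem_set_image (a := (⟨x, hx⟩ : T))
  · rintro _ ⟨D, hD, rfl⟩
    exact ⟨_, ⟨D, hD, rfl⟩, rfl⟩

theorem IsKBorelSpaceIso.restrictFam_image_val {ℬ : Set (Set X)} {𝒟 : Set (Set Y)}
    {B : Set Y} {e : X ≃ B} (he : IsKBorelSpaceIso ℬ (RestrictFam 𝒟 B) e) (A : Set X) :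
    IsKBorelSpaceIso (RestrictFam ℬ A) (RestrictFam 𝒟 (Subtype.val '' (e '' A)))
      ((e.image A).trans (Equiv.Set.image _ _ Subtype.val_injective)) :=
  (he.restrictFam A).trans (isKBorelSpaceIso_image_val 𝒟 B _)

theorem IsKBorelSpaceIso.exists_preimage {𝒞 : Set (Set Y)} {𝒟 : Set (Set Z)} {B : Set Y}
    {R : Set Z} {φ : B ≃ R} (hφ : IsKBorelSpaceIso (RestrictFam 𝒞 B) (RestrictFam 𝒟 R) φ)
    {S : Set Z} (hS : S ∈ 𝒟) : ∃ U ∈ 𝒞, ∀ x, (φ x : Z) ∈ S ↔ (x : Y) ∈ U := by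
  obtain ⟨U, hU, hEq⟩ := hφ.2 _ ⟨S, hS, rfl⟩
  exact ⟨U, hU, fun x => Set.ext_iff.1 hEq x⟩

end Isomorphisms

section Restriction

variable {κ : Cardinal.{u}} {X : Type u} {ℬ : Set (Set X)}

theorem IsKplusAlgebra.restrictFam (hℬ : IsKplusAlgebra κ ℬ) (A : Set X) :
    IsKplusAlgebra κ (RestrictFam ℬ A) := by
  refine ⟨?_, fun ι f hι hf => ?_⟩
  · rintro _ ⟨S, hS, rfl⟩
    exact ⟨Sᶜ, hℬ.1 S hS, rfl⟩
  · choose S hS hfS using hf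
    refine ⟨⋃ i, S i, hℬ.2 ι S hι hS, ?_⟩
    rw [preimage_iUnion]
    exact iUnion_congr hfS

theorem IsKBorelSpace.restrictFam (hℬ : IsKBorelSpace κ ℬ) (A : Set X) :
    IsKBorelSpace κ (RestrictFam ℬ A) := by
  obtain ⟨halg, hsep, 𝒢, h𝒢ℬ, h𝒢, hgen⟩ := hℬ
  refine ⟨halg.restrictFam A, fun x y hxy => ?_, ?_⟩
  · obtain ⟨S, hS, hx, hy⟩ := hsep x y (Subtype.coe_injective.ne hxy)
    exact ⟨_, ⟨S, hS, rfl⟩, hx, hy⟩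
  refine ⟨(Subtype.val ⁻¹' ·) '' 𝒢, ?_, mk_image_le.trans h𝒢, fun ℬ' hℬ' h𝒢ℬ' => ?_⟩
  · rintro _ ⟨S, hS, rfl⟩
    exact ⟨S, h𝒢ℬ hS, rfl⟩
  have hpull : IsKplusAlgebra κ {S : Set X | Subtype.val ⁻¹' S ∈ ℬ'} :=
    ⟨fun S hS => hℬ'.1 _ hS, fun ι f hι hf => by
      simpa only [mem_ofPred_eq, preimage_iUnion] using hℬ'.2 ι _ hι hf⟩
  rintro _ ⟨S, hS, rfl⟩
  exact hgen _ hpull (fun S hS => h𝒢ℬ' ⟨S, hS, rfl⟩) hS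

end Restriction

section Standard

variable {κ : Cardinal.{u}}

theorem kBorel_of_isKBorelSpaceIso (hreg : κ.IsRegular) (hpow : (2 : Cardinal.{u}) ^< κ = κ)
    {B R : Set (GenBaire κ)} (hB : KBorel κ B) {φ : B ≃ R}
    (hφ : IsKBorelSpaceIso (RestrictFam (KBorelFam κ _) B) (RestrictFam (KBorelFam κ _) R) φ) :
    KBorel κ R := by
  have h2 : (2 : Cardinal) ≤ κ := two_le_of_isRegular hreg
  have hcoord : ∀ b v, KBorel κ {x : GenBaire κ | x b = v} :=
    fun b v => .of_isOpen _ (isOpen_setOf_apply_eq hreg.aleph0_le b v)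
  -- `W b v` detects `(φ⁻¹ y) b = v` and `U b v` detects `(φ x) b = v`.
  choose W hW hWφ using fun b v => hφ.symm.exists_preimage (hcoord b v)
  choose U hU hUφ using fun b v => hφ.exists_preimage (hcoord b v)
  have hdecode (x : B) : (φ x : GenBaire κ) ∈ decodable W ∧ decode W (φ x) = x :=
    mem_decodable_and_decode_eq fun b v => by simpa using (hWφ b v (φ x)).symm
  have hR : R = (decodable W ∩ decode W ⁻¹' B) ∩
      ⋂ b, ⋃ v, {y | y b = v} ∩ (decodable W ∩ decode W ⁻¹' U b v) := by
    ext y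
    constructor
    · intro hy
      obtain ⟨x, rfl⟩ : ∃ x, (φ x : GenBaire κ) = y := ⟨φ.symm ⟨y, hy⟩, by simp⟩
      obtain ⟨hmem, hx⟩ := hdecode x
      refine ⟨⟨hmem, by simp [hx]⟩, mem_iInter.2 fun b => mem_iUnion.2 ⟨_, rfl, hmem, ?_⟩⟩
      rw [mem_preimage, hx]
      exact (hUφ b _ x).1 rfl
    · rintro ⟨⟨-, hyB⟩, hy⟩
      have hφy : (φ ⟨decode W y, hyB⟩ : GenBaire κ) = y := funext fun b => by
        obtain ⟨v, rfl, -, hv⟩ := mem_iUnion.1 (mem_iInter.1 hy b)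
        exact (hUφ b _ _).2 hv
      exact hφy ▸ (φ _).2
  have hG := kBorel_decodable h2 hW
  have hpre : ∀ S, KBorel κ S → KBorel κ (decodable W ∩ decode W ⁻¹' S) := fun S hS =>
    hG.inter_preimage hreg hpow
      (fun b v => by rw [inter_decode_preimage]; exact hG.inter h2 (hW b v)) hS
  rw [hR]
  exact (hpre B hB).inter h2 <| .iInter (mk_ord_toType κ).le fun b =>
    .iUnion _ _ (mk_ord_toType κ).le fun v => (hcoord b v).inter h2 (hpre _ (hU b v))

variable {X : Type u} {ℬ : Set (Set X)} {A : Set X}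

theorem IsStandardKBorel.restrictFam (hκ : 2 ≤ κ) (hℬ : IsStandardKBorel κ ℬ) (hA : A ∈ ℬ) :
    IsStandardKBorel κ (RestrictFam ℬ A) := by
  obtain ⟨hKB, B₀, hB₀, e, he⟩ := hℬ
  obtain ⟨S, hS, heA⟩ := he.1 A hA
  refine ⟨hKB.restrictFam A, _, ?_, _, he.restrictFam_image_val A⟩
  rw [heA, Subtype.image_preimage_coe]
  exact hB₀.inter hκ hS

theorem IsStandardKBorel.mem_of_restrictFam (hreg : κ.IsRegular)
    (hpow : (2 : Cardinal.{u}) ^< κ = κ) (hℬ : IsStandardKBorel κ ℬ)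
    (hA : IsStandardKBorel κ (RestrictFam ℬ A)) : A ∈ ℬ := by
  obtain ⟨-, B₀, -, e, he⟩ := hℬ
  obtain ⟨-, B₁, hB₁, e₁, he₁⟩ := hA
  have hR := kBorel_of_isKBorelSpaceIso hreg hpow hB₁ (he₁.symm.trans (he.restrictFam_image_val A))
  simpa only [preimage_image_eq _ Subtype.val_injective, e.preimage_image] using
    he.2 _ ⟨_, hR, rfl⟩

end Standard

theorem stmt_19_general (κ : Cardinal.{u}) (hreg : κ.IsRegular)
    (hpow : (2 : Cardinal.{u}) ^< κ = κ)
    (X : Type u) (ℬ : Set (Set X)) (hstd : IsStandardKBorel κ ℬ) (A : Set X) :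
    IsStandardKBorel κ (RestrictFam ℬ A) ↔ A ∈ ℬ :=
  ⟨hstd.mem_of_restrictFam hreg hpow,
    hstd.restrictFam (two_le_of_isRegular hreg)⟩

/-- a subset of a standard κ-Borel space is standard with the restricted
structure iff it is a distinguished set. -/
theorem stmt_19 (κ : Cardinal.{u}) (hreg : κ.IsRegular) (hunc : ℵ₀ < κ)
    (hpow : (2 : Cardinal.{u}) ^< κ = κ)
    (X : Type u) (ℬ : Set (Set X)) (hstd : IsStandardKBorel κ ℬ) (A : Set X) :
    IsStandardKBorel κ (RestrictFam ℬ A) ↔ A ∈ ℬ :=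
  stmt_19_general κ hreg hpow X ℬ hstd A

end GDST
end
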